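/- arXiv:2312.12769 — 6 statements merged into one kernel-verified Lean document; each statement's English description precedes it below -/
import Mathlib

section
/- Let N be a positive integer, let l ∈ {1,…,N}, and let α ∈ (0,1] satisfy (l−1)/N < α ≤ l/N and α ≥ 1/N. Let c_1,…,c_N be real numbers and let σ be a permutation of {1,…,N} with c_{σ(1)} ≥ c_{σ(2)} ≥ … ≥ c_{σ(N)}. Then CVaR^α(c_1,…,c_N) = Σ_{i=1}^{l−1} (1/(αN)) c_{σ(i)} + (1 − (l−1)/(αN)) c_{σ(l)}; that is, CVaR^α equals the ordered weighted average of c_1,…,c_N with weights w_1 = … = w_{l−1} = 1/(αN), w_l = 1 − (l−1)/(αN), and w_{l+1} = … = w_N = 0. -/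
open scoped BigOperators ENNReal

/-- Conditional Value at Risk of the values `c 1, …, c N` at risk level `α`:
`CVaR^α(c) = inf_{t ∈ ℝ} ( t + (1/(α N)) Σ_i max(c i − t, 0) )`. -/
noncomputable def cvar (N : ℕ) (α : ℝ) (c : Fin N → ℝ) : ℝ :=
  ⨅ t : ℝ, (t + 1 / (α * N) * ∑ i, max (c i - t) 0)

private lemma filter_lt_eq_map {N m : ℕ} (hm : m ≤ N) :
    Finset.univ.filter (fun i : Fin N => (i : ℕ) < m)
      = Finset.map (Fin.castLEEmb hm) Finset.univ := by
  ext i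
  simp only [Finset.mem_filter, Finset.mem_univ, true_and, Finset.mem_map,
    Fin.castLEEmb_apply]
  constructor
  · intro h; exact ⟨⟨i, h⟩, Fin.ext rfl⟩
  · rintro ⟨j, rfl⟩; exact j.isLt

private lemma filter_lt_card {N m : ℕ} (hm : m ≤ N) :
    (Finset.univ.filter (fun i : Fin N => (i : ℕ) < m)).card = m := by
  rw [filter_lt_eq_map hm, Finset.card_map, Finset.card_univ, Fintype.card_fin]

/-- If `(l−1)/N < α ≤ l/N` and `α ≥ 1/N`, and `σ` sorts the values `c` in nonincreasing order,
then `CVaR^α(c)` equals the ordered weighted average with weights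
`w_1 = … = w_{l−1} = 1/(αN)`, `w_l = 1 − (l−1)/(αN)`, `w_{l+1} = … = w_N = 0`.
(Here index `i ∈ {1,…,N}` of the paper corresponds to the Lean index `i - 1 ∈ Fin N`.) -/
theorem stmt_1 (N : ℕ) (hN : 0 < N) (l : ℕ) (hl1 : 1 ≤ l) (hlN : l ≤ N)
    (α : ℝ) (hαl : ((l : ℝ) - 1) / N < α) (hαu : α ≤ (l : ℝ) / N)
    (hαbig : 1 / (N : ℝ) ≤ α) (hα1 : α ≤ 1)
    (c : Fin N → ℝ) (σ : Equiv.Perm (Fin N))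
    (hsort : ∀ i j : Fin N, i ≤ j → c (σ j) ≤ c (σ i)) :
    cvar N α c = ∑ i : Fin N,
      (if (i : ℕ) + 1 < l then 1 / (α * N)
       else if (i : ℕ) + 1 = l then 1 - ((l : ℝ) - 1) / (α * N)
       else 0) * c (σ i) := by
  classical
  have hN' : (0 : ℝ) < N := by exact_mod_cast hN
  have hα0 : (0 : ℝ) < α := lt_of_lt_of_le (div_pos one_pos hN') hαbig
  have hA : (0 : ℝ) < α * N := mul_pos hα0 hN'
  have hAl : α * N ≤ (l : ℝ) := by
    have := (le_div_iff₀ hN').mp hαu; linarith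
  have hAg : (l : ℝ) - 1 < α * N := by
    have := (div_lt_iff₀ hN').mp hαl; linarith
  set k : Fin N := ⟨l - 1, by omega⟩ with hkdef
  have hkval : (k : ℕ) = l - 1 := rfl
  set t₀ := c (σ k) with ht₀
  -- sums are permutation invariant
  have hperm : ∀ t : ℝ, ∑ i, max (c i - t) 0 = ∑ i, max (c (σ i) - t) 0 := fun t =>
    (Equiv.sum_comp σ (fun i => max (c i - t) 0)).symm
  set G : Finset (Fin N) := Finset.univ.filter (fun i : Fin N => (i : ℕ) < l) with hGdef
  set F : Finset (Fin N) := Finset.univ.filter (fun i : Fin N => (i : ℕ) < l - 1) with hFdef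
  set S : ℝ := ∑ i ∈ F, c (σ i) with hSdef
  have hkF : k ∉ F := by simp [hFdef, hkval]
  have hGF : G = insert k F := by
    ext i
    simp only [hGdef, hFdef, Finset.mem_filter, Finset.mem_univ, true_and, Finset.mem_insert]
    constructor
    · intro h
      rcases Nat.lt_or_ge (i : ℕ) (l - 1) with h' | h'
      · exact Or.inr h'
      · exact Or.inl (Fin.ext (by omega))
    · rintro (rfl | h) <;> omega
  have hGcard : G.card = l := filter_lt_card hlN
  have hFcard : F.card = l - 1 := filter_lt_card (by omega)
  have hGsum : ∑ i ∈ G, c (σ i) = S + t₀ := by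
    rw [hGF, Finset.sum_insert hkF]; ring
  -- value of the objective at t₀
  have hmax0 : ∑ i, max (c (σ i) - t₀) 0 = S + t₀ - l * t₀ := by
    rw [← Finset.sum_filter_add_sum_filter_not Finset.univ (fun i : Fin N => (i : ℕ) < l)
      (fun i => max (c (σ i) - t₀) 0)]
    have h1 : ∑ i ∈ G, max (c (σ i) - t₀) 0 = ∑ i ∈ G, (c (σ i) - t₀) := by
      refine Finset.sum_congr rfl (fun i hi => ?_)
      have hi' : (i : ℕ) < l := (Finset.mem_filter.mp hi).2
      have hik : i ≤ k := by rw [Fin.le_def]; omega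
      have := hsort i k hik
      exact max_eq_left (by linarith)
    have h2 : ∑ i ∈ Finset.univ.filter (fun i : Fin N => ¬ (i : ℕ) < l),
        max (c (σ i) - t₀) 0 = 0 := by
      refine Finset.sum_eq_zero (fun i hi => ?_)
      have hi' : ¬ (i : ℕ) < l := (Finset.mem_filter.mp hi).2
      have hki : k ≤ i := by rw [Fin.le_def]; omega
      have := hsort k i hki
      exact max_eq_right (by linarith)
    rw [show (Finset.univ.filter fun i : Fin N => (i:ℕ) < l) = G from rfl, h1, h2, add_zero,
      Finset.sum_sub_distrib, Finset.sum_const, hGcard, hGsum, nsmul_eq_mul]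
  -- lower-bound sums
  have hlowF : ∀ t : ℝ, S - ((l : ℝ) - 1) * t ≤ ∑ i, max (c (σ i) - t) 0 := by
    intro t
    have h1 : ∑ i ∈ F, (c (σ i) - t) ≤ ∑ i ∈ F, max (c (σ i) - t) 0 :=
      Finset.sum_le_sum (fun i _ => le_max_left _ _)
    have h2 : ∑ i ∈ F, max (c (σ i) - t) 0 ≤ ∑ i, max (c (σ i) - t) 0 :=
      Finset.sum_le_sum_of_subset_of_nonneg (Finset.subset_univ _)
        (fun i _ _ => le_max_right _ _)
    have h3 : ∑ i ∈ F, (c (σ i) - t) = S - ((l : ℝ) - 1) * t := by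
      rw [Finset.sum_sub_distrib, Finset.sum_const, hFcard, nsmul_eq_mul]
      have : ((l - 1 : ℕ) : ℝ) = (l : ℝ) - 1 := by
        push_cast [hl1]; ring
      rw [this, hSdef]
    linarith
  have hlowG : ∀ t : ℝ, S + t₀ - (l : ℝ) * t ≤ ∑ i, max (c (σ i) - t) 0 := by
    intro t
    have h1 : ∑ i ∈ G, (c (σ i) - t) ≤ ∑ i ∈ G, max (c (σ i) - t) 0 :=
      Finset.sum_le_sum (fun i _ => le_max_left _ _)
    have h2 : ∑ i ∈ G, max (c (σ i) - t) 0 ≤ ∑ i, max (c (σ i) - t) 0 :=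
      Finset.sum_le_sum_of_subset_of_nonneg (Finset.subset_univ _)
        (fun i _ _ => le_max_right _ _)
    have h3 : ∑ i ∈ G, (c (σ i) - t) = S + t₀ - (l : ℝ) * t := by
      rw [Finset.sum_sub_distrib, Finset.sum_const, hGcard, hGsum, nsmul_eq_mul]
    linarith
  -- the target value V
  set V : ℝ := 1 / (α * N) * S + (1 - ((l : ℝ) - 1) / (α * N)) * t₀ with hVdef
  have hRHS : (∑ i : Fin N,
      (if (i : ℕ) + 1 < l then 1 / (α * N)
       else if (i : ℕ) + 1 = l then 1 - ((l : ℝ) - 1) / (α * N)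
       else 0) * c (σ i)) = V := by
    have hsplit : ∀ i : Fin N,
        (if (i : ℕ) + 1 < l then 1 / (α * N)
         else if (i : ℕ) + 1 = l then 1 - ((l : ℝ) - 1) / (α * N)
         else 0) * c (σ i)
        = (if (i : ℕ) < l - 1 then (1 / (α * N)) * c (σ i) else 0)
          + (if i = k then (1 - ((l : ℝ) - 1) / (α * N)) * c (σ i) else 0) := by
      intro i
      by_cases h1 : (i : ℕ) + 1 < l
      · have hik : ¬ i = k := by
          intro h; rw [h] at h1; omega
        have h1' : (i : ℕ) < l - 1 := by omega
        rw [if_pos h1, if_pos h1', if_neg hik, add_zero]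
      · by_cases h2 : (i : ℕ) + 1 = l
        · have hik : i = k := Fin.ext (by omega)
          have h1' : ¬ (i : ℕ) < l - 1 := by omega
          rw [if_neg h1, if_pos h2, if_neg h1', if_pos hik, zero_add]
        · have hik : ¬ i = k := by
            intro h; rw [h] at h2; omega
          have h1' : ¬ (i : ℕ) < l - 1 := by omega
          simp [h1, h2, h1', hik]
    rw [Finset.sum_congr rfl (fun i _ => hsplit i), Finset.sum_add_distrib]
    have e1 : ∑ i : Fin N, (if (i : ℕ) < l - 1 then (1 / (α * N)) * c (σ i) else 0)
        = 1 / (α * N) * S := by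
      rw [← Finset.sum_filter, hSdef, Finset.mul_sum]
    have e2 : ∑ i : Fin N, (if i = k then (1 - ((l : ℝ) - 1) / (α * N)) * c (σ i) else 0)
        = (1 - ((l : ℝ) - 1) / (α * N)) * t₀ := by
      rw [Finset.sum_ite_eq' Finset.univ k (fun i => (1 - ((l : ℝ) - 1) / (α * N)) * c (σ i))]
      simp [ht₀]
    rw [e1, e2]
  -- every t gives value ≥ V
  have hlow : ∀ t : ℝ, V ≤ t + 1 / (α * N) * ∑ i, max (c i - t) 0 := by
    intro t
    rw [hperm t]
    rcases le_total t t₀ with h | h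
    · have := hlowG t
      have hmono : 1 / (α * N) * (S + t₀ - (l : ℝ) * t) ≤
          1 / (α * N) * ∑ i, max (c (σ i) - t) 0 := by
        apply mul_le_mul_of_nonneg_left this (by positivity)
      have key : V ≤ t + 1 / (α * N) * (S + t₀ - (l : ℝ) * t) := by
        rw [hVdef]
        have h1 : (1 - (l : ℝ) / (α * N)) ≤ 0 := by
          rw [sub_nonpos, le_div_iff₀ hA]; linarith
        have expand : t + 1 / (α * N) * (S + t₀ - (l : ℝ) * t)
            - (1 / (α * N) * S + (1 - ((l : ℝ) - 1) / (α * N)) * t₀)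
            = (1 - (l : ℝ) / (α * N)) * (t - t₀) := by
          field_simp
          ring
        nlinarith [mul_nonneg (neg_nonneg.mpr h1) (sub_nonneg.mpr h)]
      linarith
    · have := hlowF t
      have hmono : 1 / (α * N) * (S - ((l : ℝ) - 1) * t) ≤
          1 / (α * N) * ∑ i, max (c (σ i) - t) 0 := by
        apply mul_le_mul_of_nonneg_left this (by positivity)
      have key : V ≤ t + 1 / (α * N) * (S - ((l : ℝ) - 1) * t) := by
        rw [hVdef]
        have h1 : (0 : ℝ) ≤ 1 - ((l : ℝ) - 1) / (α * N) := by
          rw [sub_nonneg, div_le_one hA]; linarith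
        have expand : t + 1 / (α * N) * (S - ((l : ℝ) - 1) * t)
            - (1 / (α * N) * S + (1 - ((l : ℝ) - 1) / (α * N)) * t₀)
            = (1 - ((l : ℝ) - 1) / (α * N)) * (t - t₀) := by
          field_simp
          ring
        nlinarith [mul_nonneg h1 (sub_nonneg.mpr h)]
      linarith
  -- value at t₀ equals V
  have hval : t₀ + 1 / (α * N) * ∑ i, max (c i - t₀) 0 = V := by
    rw [hperm t₀, hmax0, hVdef]
    field_simp
    ring
  rw [hRHS]
  unfold cvar
  apply le_antisymm
  · calc (⨅ t : ℝ, (t + 1 / (α * N) * ∑ i, max (c i - t) 0))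
        ≤ t₀ + 1 / (α * N) * ∑ i, max (c i - t₀) 0 := by
          apply ciInf_le
          refine ⟨V, ?_⟩
          rintro x ⟨t, rfl⟩
          exact hlow t
      _ = V := hval
  · exact le_ciInf hlow
end

section
/- Let N be a positive integer, α ∈ (0,1], and let c_1,…,c_N be nonnegative real numbers. Set γ = N if α < 1/N and γ = 1/α if α ≥ 1/N (equivalently γ = min{N, 1/α}). Then CVaR^α(c_1,…,c_N) ≤ γ · (1/N) Σ_{i=1}^N c_i. -/
open scoped BigOperators ENNReal

lemma cvar_bdd (N : ℕ) (hN : 0 < N) (α : ℝ) (hα0 : 0 < α) (hα1 : α ≤ 1)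
    (c : Fin N → ℝ) (hc : ∀ i, 0 ≤ c i) :
    BddBelow (Set.range fun t : ℝ => t + 1 / (α * N) * ∑ i, max (c i - t) 0) := by
  have hNpos : (0:ℝ) < N := by exact_mod_cast hN
  have hk : (0:ℝ) < 1 / (α * N) := by positivity
  refine ⟨0, ?_⟩
  rintro x ⟨t, rfl⟩
  rcases le_or_gt 0 t with ht | ht
  · have hs : 0 ≤ ∑ i, max (c i - t) 0 :=
      Finset.sum_nonneg fun i _ => le_max_right _ _
    positivity
  · have h1 : ∑ i, (c i - t) ≤ ∑ i, max (c i - t) 0 :=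
      Finset.sum_le_sum fun i _ => le_max_left _ _
    have h2 : ∑ i, (c i - t) = (∑ i, c i) - N * t := by
      rw [Finset.sum_sub_distrib]; simp [Finset.card_univ, mul_comm]
    have hsc : 0 ≤ ∑ i, c i := Finset.sum_nonneg fun i _ => hc i
    have hkN : 1 ≤ 1 / (α * N) * N := by
      rw [div_mul_eq_mul_div, one_mul, le_div_iff₀ (by positivity)]
      nlinarith
    have : t + 1 / (α * N) * ((∑ i, c i) - N * t) ≤
        t + 1 / (α * N) * ∑ i, max (c i - t) 0 := by
      have := h1; rw [h2] at this; nlinarith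
    nlinarith [mul_nonneg hk.le hsc]

/-- For nonnegative values and `γ = N` if `α < 1/N`, `γ = 1/α` if `α ≥ 1/N`, one has
`CVaR^α(c) ≤ γ · (1/N) Σ_i c_i`. -/
theorem stmt_5 (N : ℕ) (hN : 0 < N) (α : ℝ) (hα0 : 0 < α) (hα1 : α ≤ 1)
    (c : Fin N → ℝ) (hc : ∀ i, 0 ≤ c i) :
    cvar N α c ≤ (if α < 1 / (N : ℝ) then (N : ℝ) else 1 / α) * ((1 / (N : ℝ)) * ∑ i, c i) := by
  have hNpos : (0:ℝ) < N := by exact_mod_cast hN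
  have hbdd := cvar_bdd N hN α hα0 hα1 c hc
  split_ifs with h
  · -- take t = ∑ c i
    have hle : cvar N α c ≤ (∑ i, c i) + 1 / (α * N) * ∑ i, max (c i - ∑ j, c j) 0 :=
      ciInf_le hbdd (∑ i, c i)
    have hz : ∀ i : Fin N, max (c i - ∑ j, c j) 0 = 0 := by
      intro i
      have : c i ≤ ∑ j, c j :=
        Finset.single_le_sum (fun j _ => hc j) (Finset.mem_univ i)
      simp [max_eq_right, sub_nonpos.mpr this]
    simp only [hz, Finset.sum_const_zero, mul_zero, add_zero] at hle
    have : (N:ℝ) * ((1 / N) * ∑ i, c i) = ∑ i, c i := by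
      field_simp
    linarith
  · -- take t = 0
    have hle : cvar N α c ≤ 0 + 1 / (α * N) * ∑ i, max (c i - 0) 0 :=
      ciInf_le hbdd 0
    have hz : ∀ i : Fin N, max (c i - 0) 0 = c i := by
      intro i; simp [max_eq_left (hc i)]
    simp only [hz] at hle
    have : 1 / (α * N) * ∑ i, c i = 1 / α * ((1 / N) * ∑ i, c i) := by
      field_simp
    linarith
end

section
/- Let X ⊆ {0,1}^n be a nonempty finite set, let ξ̂_1,…,ξ̂_N ∈ ℝ^n_+ be cost realizations, let α ∈ (0,1], ε ≥ 0, q ∈ [1,∞], and set γ = min{N, 1/α}. Suppose x' ∈ X minimizes the function x ↦ (1/N) Σ_{i=1}^N ξ̂_iᵀx + ε ‖x‖_{q'} over X. Then x' is a γ-approximate solution to the problem of minimizing x ↦ CVaR^α(ξ̂_1ᵀx,…,ξ̂_Nᵀx) + γ ε ‖x‖_{q'} over X; that is, for every x ∈ X, CVaR^α(ξ̂_1ᵀx',…,ξ̂_Nᵀx') + γ ε ‖x'‖_{q'} ≤ γ · ( CVaR^α(ξ̂_1ᵀx,…,ξ̂_Nᵀx) + γ ε ‖x‖_{q'} ). 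-/
open scoped BigOperators ENNReal

/-- The `q`-norm on `ℝ^n`, for an exponent `q ∈ [1,∞]` (represented as `ℝ≥0∞`). -/
noncomputable def qnorm {n : ℕ} (q : ℝ≥0∞) (v : Fin n → ℝ) : ℝ :=
  if q = ⊤ then ⨆ i, |v i| else (∑ i, |v i| ^ q.toReal) ^ (1 / q.toReal)

/-!
The sample mean sandwiches CVaR: `mean c ≤ CVaR^α(c)` because `α ≤ 1`, and for nonnegative
costs `CVaR^α(c) ≤ min(N, 1/α) · mean c`, by evaluating the defining infimum at `t = Σ c_i`
(all excess terms vanish) and at `t = 0` (the excess terms are the costs themselves).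
Chaining the upper bound at `x'`, the optimality of `x'` for the mean-based problem, and the
lower bound at `x` gives the approximation factor `γ = min(N, 1/α) ≥ 1`.
-/

lemma qnorm_nonneg {n : ℕ} (q : ℝ≥0∞) (v : Fin n → ℝ) : 0 ≤ qnorm q v := by
  unfold qnorm
  split
  · exact Real.iSup_nonneg fun i => abs_nonneg _
  · exact Real.rpow_nonneg (Finset.sum_nonneg fun i _ => Real.rpow_nonneg (abs_nonneg _) _) _

section CVaR

variable {N : ℕ} {α : ℝ} (hN : 0 < N) (hα0 : 0 < α) (hα1 : α ≤ 1)
include hN hα0 hα1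

lemma mean_le_cvar_objective (c : Fin N → ℝ) (t : ℝ) :
    1 / (N : ℝ) * ∑ i, c i ≤ t + 1 / (α * N) * ∑ i, max (c i - t) 0 := by
  have hexcess : ∑ i, (c i - t) ≤ ∑ i, max (c i - t) 0 :=
    Finset.sum_le_sum fun i _ => le_max_left _ _
  have hexcess_nonneg : 0 ≤ ∑ i, max (c i - t) 0 :=
    Finset.sum_nonneg fun i _ => le_max_right _ _
  have hweight : 1 / (N : ℝ) ≤ 1 / (α * N) :=
    one_div_le_one_div_of_le (by positivity) (by nlinarith)
  have hmean : 1 / (N : ℝ) * ∑ i, (c i - t) = 1 / N * ∑ i, c i - t := by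
    rw [Finset.sum_sub_distrib, Finset.sum_const, Finset.card_univ, Fintype.card_fin,
      nsmul_eq_mul]
    field_simp
  calc 1 / (N : ℝ) * ∑ i, c i = t + 1 / N * ∑ i, (c i - t) := by rw [hmean]; ring
    _ ≤ t + 1 / N * ∑ i, max (c i - t) 0 := by gcongr
    _ ≤ t + 1 / (α * N) * ∑ i, max (c i - t) 0 := by gcongr

lemma mean_le_cvar (c : Fin N → ℝ) : 1 / (N : ℝ) * ∑ i, c i ≤ cvar N α c :=
  le_ciInf (mean_le_cvar_objective hN hα0 hα1 c)

lemma cvar_le_objective (c : Fin N → ℝ) (t : ℝ) :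
    cvar N α c ≤ t + 1 / (α * N) * ∑ i, max (c i - t) 0 :=
  ciInf_le ⟨_, Set.forall_mem_range.2 (mean_le_cvar_objective hN hα0 hα1 c)⟩ t

lemma cvar_le_sum {c : Fin N → ℝ} (hc : ∀ i, 0 ≤ c i) : cvar N α c ≤ ∑ i, c i := by
  have hexcess : ∀ i, max (c i - ∑ j, c j) 0 = 0 := fun i =>
    max_eq_right (sub_nonpos.2 (Finset.single_le_sum (fun j _ => hc j) (Finset.mem_univ i)))
  simpa only [hexcess, Finset.sum_const_zero, mul_zero, add_zero] using
    cvar_le_objective hN hα0 hα1 c (∑ i, c i)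

lemma cvar_le_div_mul_sum {c : Fin N → ℝ} (hc : ∀ i, 0 ≤ c i) :
    cvar N α c ≤ 1 / (α * N) * ∑ i, c i := by
  have hexcess : ∀ i, max (c i - 0) 0 = c i := fun i => by rw [sub_zero, max_eq_left (hc i)]
  simpa only [hexcess, zero_add] using cvar_le_objective hN hα0 hα1 c 0

lemma cvar_le_min_mul_mean {c : Fin N → ℝ} (hc : ∀ i, 0 ≤ c i) :
    cvar N α c ≤ min (N : ℝ) (1 / α) * (1 / (N : ℝ) * ∑ i, c i) := by
  have hNpos : (0 : ℝ) < N := by exact_mod_cast hN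
  rcases le_total (N : ℝ) (1 / α) with h | h
  · rw [min_eq_left h, ← mul_assoc, mul_one_div_cancel hNpos.ne', one_mul]
    exact cvar_le_sum hN hα0 hα1 hc
  · rw [min_eq_right h]
    convert cvar_le_div_mul_sum hN hα0 hα1 hc using 1
    field_simp

end CVaR

/-- `m`, `m'` are the surrogate (mean) costs and `a`, `a'` the true (CVaR) costs at `x`, `x'`. -/
lemma approx_of_sandwich {γ ε a a' m m' r r' : ℝ} (hγ : 1 ≤ γ) (hε : 0 ≤ ε) (hr : 0 ≤ r)
    (hupper : a' ≤ γ * m') (hlower : m ≤ a) (hopt : m' + ε * r' ≤ m + ε * r) :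
    a' + γ * ε * r' ≤ γ * (a + γ * ε * r) := by
  have hγ0 : 0 ≤ γ := zero_le_one.trans hγ
  have hpenalty : ε * r ≤ γ * ε * r := by
    rw [mul_assoc]; exact le_mul_of_one_le_left (mul_nonneg hε hr) hγ
  calc a' + γ * ε * r' ≤ γ * (m' + ε * r') := by linarith
    _ ≤ γ * (m + ε * r) := mul_le_mul_of_nonneg_left hopt hγ0
    _ ≤ γ * (a + γ * ε * r) := mul_le_mul_of_nonneg_left (by linarith) hγ0

theorem stmt_6_general (n N : ℕ) (hN : 0 < N) (X : Finset (Fin n → ℝ))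
    (hXbin : ∀ x ∈ X, ∀ j, x j = 0 ∨ x j = 1)
    (ξ : Fin N → Fin n → ℝ) (hξ : ∀ i j, 0 ≤ ξ i j)
    (α : ℝ) (hα0 : 0 < α) (hα1 : α ≤ 1) (ε : ℝ) (hε : 0 ≤ ε)
    (q' : ℝ≥0∞)
    (x' : Fin n → ℝ) (hx' : x' ∈ X)
    (hopt : ∀ x ∈ X,
      (1 / (N : ℝ)) * (∑ i, ∑ j, ξ i j * x' j) + ε * qnorm q' x' ≤
        (1 / (N : ℝ)) * (∑ i, ∑ j, ξ i j * x j) + ε * qnorm q' x) :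
    ∀ x ∈ X,
      cvar N α (fun i => ∑ j, ξ i j * x' j) + min (N : ℝ) (1 / α) * ε * qnorm q' x' ≤
        min (N : ℝ) (1 / α) *
          (cvar N α (fun i => ∑ j, ξ i j * x j) + min (N : ℝ) (1 / α) * ε * qnorm q' x) := by
  intro x hx
  have hγ : 1 ≤ min (N : ℝ) (1 / α) :=
    le_min (by exact_mod_cast hN) (by rwa [le_div_iff₀ hα0, one_mul])
  have hx'_nonneg : ∀ j, 0 ≤ x' j := fun j => by
    rcases hXbin x' hx' j with h | h <;> simp [h]
  have hcost_nonneg : ∀ i, 0 ≤ ∑ j, ξ i j * x' j :=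
    fun i => Finset.sum_nonneg fun j _ => mul_nonneg (hξ i j) (hx'_nonneg j)
  exact approx_of_sandwich hγ hε (qnorm_nonneg q' x)
    (cvar_le_min_mul_mean hN hα0 hα1 hcost_nonneg) (mean_le_cvar hN hα0 hα1 _) (hopt x hx)

/-- Let `X` be a nonempty finite subset of `{0,1}^n`, `ξ̂_1,…,ξ̂_N ∈ ℝ^n_+`,
`α ∈ (0,1]`, `ε ≥ 0`, `q ∈ [1,∞]` with dual exponent `q'` (`1/q + 1/q' = 1`), and
`γ = min{N, 1/α}`.  If `x'` minimizes `x ↦ (1/N) Σ_i ξ̂_iᵀx + ε‖x‖_{q'}` over `X`, then `x'`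
is a `γ`-approximate solution to minimizing `x ↦ CVaR^α(ξ̂_1ᵀx,…,ξ̂_Nᵀx) + γ ε ‖x‖_{q'}`. -/
theorem stmt_6 (n N : ℕ) (hN : 0 < N) (X : Finset (Fin n → ℝ)) (hXne : X.Nonempty)
    (hXbin : ∀ x ∈ X, ∀ j, x j = 0 ∨ x j = 1)
    (ξ : Fin N → Fin n → ℝ) (hξ : ∀ i j, 0 ≤ ξ i j)
    (α : ℝ) (hα0 : 0 < α) (hα1 : α ≤ 1) (ε : ℝ) (hε : 0 ≤ ε)
    (q q' : ℝ≥0∞) (hq : 1 ≤ q) (hdual : 1 / q + 1 / q' = 1)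
    (x' : Fin n → ℝ) (hx' : x' ∈ X)
    (hopt : ∀ x ∈ X,
      (1 / (N : ℝ)) * (∑ i, ∑ j, ξ i j * x' j) + ε * qnorm q' x' ≤
        (1 / (N : ℝ)) * (∑ i, ∑ j, ξ i j * x j) + ε * qnorm q' x) :
    ∀ x ∈ X,
      cvar N α (fun i => ∑ j, ξ i j * x' j) + min (N : ℝ) (1 / α) * ε * qnorm q' x' ≤
        min (N : ℝ) (1 / α) *
          (cvar N α (fun i => ∑ j, ξ i j * x j) + min (N : ℝ) (1 / α) * ε * qnorm q' x) :=
  stmt_6_general n N hN X hXbin ξ hξ α hα0 hα1 ε hε q' x' hx' hopt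
end

section
/- Let N be a positive integer, w_1,…,w_N nonnegative real numbers, x ∈ ℝ^n, ε ≥ 0, and q ∈ [1,∞]. Then the supremum of Σ_{i=1}^N w_i Δ_iᵀx over all (Δ_1,…,Δ_N) ∈ (ℝ^n)^N satisfying (1/N) Σ_{i=1}^N ‖Δ_i‖_q ≤ ε equals N ε (max_{i ∈ {1,…,N}} w_i) ‖x‖_{q'}. -/
/-
By Hölder's inequality each term satisfies `w_i Δ_iᵀx ≤ (max w) ‖Δ_i‖_q ‖x‖_{q'}`, so the
objective is at most `(max w) · N ε · ‖x‖_{q'}` on the budget set. The bound is attained by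
spending the whole budget `N ε` on one sample of maximal weight, in the direction of a vector
of unit `q`-norm that norms `x`, which the equality case of Hölder's inequality provides.
-/

open scoped BigOperators ENNReal

open WithLp Finset

lemma qnorm_eq_norm_toLp {n : ℕ} {q : ℝ≥0∞} (hq : q ≠ 0) (v : Fin n → ℝ) :
    qnorm q v = ‖toLp q v‖ := by
  unfold qnorm
  split_ifs with htop
  · subst htop; rfl
  · simp [PiLp.norm_eq_sum (ENNReal.toReal_pos hq htop)]

lemma abs_sign_le_one (a : ℝ) : |(SignType.sign a : ℝ)| ≤ 1 := by
  rcases lt_trichotomy a 0 with h | h | h <;> simp [h]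

lemma sign_mul_rpow_sub_one_mul_self {r : ℝ} (hr : r ≠ 0) (a : ℝ) :
    SignType.sign a * |a| ^ (r - 1) * a = |a| ^ r := by
  rcases eq_or_ne a 0 with rfl | ha
  · simp [Real.zero_rpow hr]
  · rw [mul_right_comm, sign_mul_self, mul_comm, ← Real.rpow_add_one (abs_ne_zero.2 ha)]
    ring_nf

lemma abs_sign_mul_rpow {r : ℝ} (hr : r ≠ 0) (a : ℝ) :
    |SignType.sign a * |a| ^ r| = |a| ^ r := by
  rcases lt_trichotomy a 0 with h | rfl | h
  · simp [h, abs_of_nonneg (Real.rpow_nonneg (abs_nonneg a) r)]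
  · simp [Real.zero_rpow hr]
  · simp [h, abs_of_nonneg (Real.rpow_nonneg (abs_nonneg a) r)]

section HolderDuality

variable {ι : Type*} [Fintype ι]

theorem Real.exists_Lp_le_one_inner_eq_Lq {p q : ℝ} (hpq : p.HolderConjugate q) (x : ι → ℝ) :
    ∃ v : ι → ℝ, (∑ i, |v i| ^ p) ^ (1 / p) ≤ 1 ∧ ∑ i, v i * x i = (∑ i, |x i| ^ q) ^ (1 / q) := by
  set S := ∑ i, |x i| ^ q with hS_def
  rcases (show 0 ≤ S by positivity).eq_or_lt with hS | hS
  · refine ⟨0, ?_, ?_⟩ <;> simp [← hS, Real.zero_rpow, hpq.ne_zero, hpq.symm.ne_zero]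
  -- `sign (x i) * |x i| ^ (q - 1)` is the equality case of Hölder; its `p`-norm is `S ^ (1 / p)`
  set C := S ^ (1 / p)
  have hC : 0 < C := by positivity
  refine ⟨fun i ↦ SignType.sign (x i) * |x i| ^ (q - 1) / C, le_of_eq ?_, ?_⟩
  · have hterm (i : ι) : |SignType.sign (x i) * |x i| ^ (q - 1) / C| ^ p = |x i| ^ q / S := by
      rw [abs_div, abs_sign_mul_rpow (sub_ne_zero.2 hpq.symm.lt.ne') _,
        abs_of_pos hC, Real.div_rpow (by positivity) hC.le, ← Real.rpow_mul (abs_nonneg _),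
        hpq.symm.sub_one_mul_conj, ← Real.rpow_mul hS.le, one_div_mul_cancel hpq.ne_zero,
        Real.rpow_one]
    simp only [hterm, ← sum_div, ← hS_def, div_self hS.ne', Real.one_rpow]
  · simp only [div_mul_eq_mul_div, sign_mul_rpow_sub_one_mul_self hpq.symm.ne_zero, ← sum_div,
      ← hS_def]
    rw [show 1 / q = 1 - 1 / p by simp only [one_div, hpq.one_sub_inv], Real.rpow_sub hS,
      Real.rpow_one]

theorem sum_mul_le_norm_toLp_top_mul_norm_toLp_one (v x : ι → ℝ) :
    ∑ i, v i * x i ≤ ‖toLp ∞ v‖ * ‖toLp 1 x‖ := by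
  rw [PiLp.norm_toLp, PiLp.norm_eq_of_L1, mul_sum]
  refine sum_le_sum fun i _ ↦ ?_
  calc v i * x i ≤ |v i| * |x i| := (le_abs_self _).trans (abs_mul _ _).le
    _ ≤ ‖v‖ * |x i| := by gcongr; exact norm_le_pi_norm v i

theorem exists_norm_toLp_top_le_one_sum_mul_eq (x : ι → ℝ) :
    ∃ v : ι → ℝ, ‖toLp ∞ v‖ ≤ 1 ∧ ∑ i, v i * x i = ‖toLp 1 x‖ := by
  refine ⟨fun i ↦ SignType.sign (x i), ?_, ?_⟩
  · rw [PiLp.norm_toLp]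
    exact (pi_norm_le_iff_of_nonneg zero_le_one).2 fun i ↦ abs_sign_le_one (x i)
  · simp [PiLp.norm_eq_of_L1]

theorem exists_norm_toLp_one_le_one_sum_mul_eq (x : ι → ℝ) :
    ∃ v : ι → ℝ, ‖toLp 1 v‖ ≤ 1 ∧ ∑ i, v i * x i = ‖toLp ∞ x‖ := by
  cases isEmpty_or_nonempty ι
  · exact ⟨0, by simp, by simp [Subsingleton.elim x 0]⟩
  classical
  obtain ⟨j, -, hj⟩ := univ.exists_max_image (fun i ↦ |x i|) univ_nonempty
  refine ⟨Pi.single j (SignType.sign (x j)), ?_, ?_⟩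
  · simpa [PiLp.norm_eq_of_L1] using abs_sign_le_one (x j)
  · have hx : ‖x‖ = |x j| := le_antisymm
      ((pi_norm_le_iff_of_nonneg (abs_nonneg _)).2 fun i ↦ hj i (mem_univ i)) (norm_le_pi_norm x j)
    simp [Pi.single_apply, hx]

variable {p q : ℝ≥0∞} [p.HolderConjugate q]

theorem sum_mul_le_norm_toLp_mul_norm_toLp (v x : ι → ℝ) :
    ∑ i, v i * x i ≤ ‖toLp p v‖ * ‖toLp q x‖ := by
  rcases eq_or_ne p ∞ with rfl | hp
  · obtain rfl : q = 1 := (ENNReal.HolderConjugate.eq_top_iff_eq_one ∞ q).1 rfl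
    exact sum_mul_le_norm_toLp_top_mul_norm_toLp_one v x
  rcases eq_or_ne q ∞ with rfl | hq
  · obtain rfl : p = 1 := (ENNReal.HolderConjugate.eq_top_iff_eq_one ∞ p).1 rfl
    simpa only [mul_comm] using sum_mul_le_norm_toLp_top_mul_norm_toLp_one x v
  have hpq := ENNReal.HolderConjugate.toReal_of_ne_top hp hq
  rw [PiLp.norm_eq_sum hpq.pos, PiLp.norm_eq_sum hpq.symm.pos]
  simpa using Real.inner_le_Lp_mul_Lq univ v x hpq

theorem exists_norm_toLp_le_one_sum_mul_eq (x : ι → ℝ) :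
    ∃ v : ι → ℝ, ‖toLp p v‖ ≤ 1 ∧ ∑ i, v i * x i = ‖toLp q x‖ := by
  rcases eq_or_ne p ∞ with rfl | hp
  · obtain rfl : q = 1 := (ENNReal.HolderConjugate.eq_top_iff_eq_one ∞ q).1 rfl
    exact exists_norm_toLp_top_le_one_sum_mul_eq x
  rcases eq_or_ne q ∞ with rfl | hq
  · obtain rfl : p = 1 := (ENNReal.HolderConjugate.eq_top_iff_eq_one ∞ p).1 rfl
    exact exists_norm_toLp_one_le_one_sum_mul_eq x
  have hpq := ENNReal.HolderConjugate.toReal_of_ne_top hp hq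
  rw [PiLp.norm_eq_sum hpq.symm.pos]
  simpa [PiLp.norm_eq_sum hpq.pos] using Real.exists_Lp_le_one_inner_eq_Lq hpq x

end HolderDuality

section WorstCasePerturbation

variable {κ ι : Type*} [Fintype κ] [Fintype ι] {p q : ℝ≥0∞} [p.HolderConjugate q]

theorem weighted_sum_inner_le_sup'_mul_sum_norm_mul_norm (hκ : (univ : Finset κ).Nonempty)
    {w : κ → ℝ} (hw : ∀ k, 0 ≤ w k) (Δ : κ → ι → ℝ) (x : ι → ℝ) :
    ∑ k, w k * ∑ i, Δ k i * x i ≤ univ.sup' hκ w * (∑ k, ‖toLp p (Δ k)‖) * ‖toLp q x‖ := by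
  have : Fact (1 ≤ p) := ⟨ENNReal.HolderConjugate.one_le p q⟩
  have : Fact (1 ≤ q) := ⟨ENNReal.HolderConjugate.one_le q p⟩
  calc ∑ k, w k * ∑ i, Δ k i * x i
      ≤ ∑ k, w k * (‖toLp p (Δ k)‖ * ‖toLp q x‖) := by
        gcongr with k
        · exact hw k
        · exact sum_mul_le_norm_toLp_mul_norm_toLp _ _
    _ ≤ ∑ k, univ.sup' hκ w * (‖toLp p (Δ k)‖ * ‖toLp q x‖) := by
        gcongr with k
        exact le_sup' w (mem_univ k)
    _ = univ.sup' hκ w * (∑ k, ‖toLp p (Δ k)‖) * ‖toLp q x‖ := by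
        rw [← mul_sum, ← sum_mul, mul_assoc]

theorem isGreatest_weighted_sum_inner_of_sum_norm_le (hκ : (univ : Finset κ).Nonempty)
    {w : κ → ℝ} (hw : ∀ k, 0 ≤ w k) (x : ι → ℝ) {c : ℝ} (hc : 0 ≤ c) :
    IsGreatest {y : ℝ | ∃ Δ : κ → ι → ℝ,
        ∑ k, ‖toLp p (Δ k)‖ ≤ c ∧ y = ∑ k, w k * ∑ i, Δ k i * x i}
      (c * univ.sup' hκ w * ‖toLp q x‖) := by
  classical
  have : Fact (1 ≤ p) := ⟨ENNReal.HolderConjugate.one_le p q⟩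
  have : Fact (1 ≤ q) := ⟨ENNReal.HolderConjugate.one_le q p⟩
  obtain ⟨k₀, -, hk₀⟩ := exists_mem_eq_sup' hκ w
  obtain ⟨v, hv, hvx⟩ := exists_norm_toLp_le_one_sum_mul_eq (p := p) (q := q) x
  -- the whole budget goes to a sample of largest weight, along a norming vector of `x`
  refine ⟨⟨Pi.single k₀ (c • v), ?_, ?_⟩, ?_⟩
  · rw [Fintype.sum_eq_single k₀ fun k hk ↦ by simp [hk]]
    rw [Pi.single_eq_same, toLp_smul, norm_smul, Real.norm_of_nonneg hc]
    exact mul_le_of_le_one_right hc hv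
  · rw [Fintype.sum_eq_single k₀ fun k hk ↦ by simp [hk]]
    simp only [Pi.single_eq_same, Pi.smul_apply, smul_eq_mul, mul_assoc, ← mul_sum, hvx, hk₀]
    ring
  · rintro y ⟨Δ, hΔ, rfl⟩
    have hM : 0 ≤ univ.sup' hκ w := hk₀ ▸ hw k₀
    calc _ ≤ univ.sup' hκ w * (∑ k, ‖toLp p (Δ k)‖) * ‖toLp q x‖ :=
          weighted_sum_inner_le_sup'_mul_sum_norm_mul_norm hκ hw Δ x
      _ ≤ univ.sup' hκ w * c * ‖toLp q x‖ := by gcongr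
      _ = c * univ.sup' hκ w * ‖toLp q x‖ := by ring

end WorstCasePerturbation

theorem stmt_8_general (n N : ℕ) (hN : 0 < N) (w : Fin N → ℝ) (hw : ∀ i, 0 ≤ w i)
    (x : Fin n → ℝ) (ε : ℝ) (hε : 0 ≤ ε)
    (q q' : ℝ≥0∞) (hdual : 1 / q + 1 / q' = 1) :
    sSup {y : ℝ | ∃ Δ : Fin N → Fin n → ℝ,
        (1 / (N : ℝ)) * (∑ i, qnorm q (Δ i)) ≤ ε ∧
        y = ∑ i, w i * ∑ j, Δ i j * x j} =
      N * ε * (Finset.univ.sup' (Finset.univ_nonempty_iff.mpr ⟨⟨0, hN⟩⟩) w) * qnorm q' x := by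
  have hqq' : q.HolderConjugate q' :=
    ENNReal.holderConjugate_iff.2 (by simpa only [one_div] using hdual)
  have hN' : (0 : ℝ) < N := Nat.cast_pos.2 hN
  simp only [qnorm_eq_norm_toLp (hqq'.ne_zero q q'), qnorm_eq_norm_toLp (hqq'.symm.ne_zero),
    one_div_mul_eq_div, div_le_iff₀' hN']
  exact (isGreatest_weighted_sum_inner_of_sum_norm_le _ hw x (by positivity)).csSup_eq

/-- For nonnegative weights `w_1,…,w_N`, the supremum of `Σ_i w_i Δ_iᵀx` over all
perturbations with `(1/N) Σ_i ‖Δ_i‖_q ≤ ε` equals `N ε (max_i w_i) ‖x‖_{q'}`,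
where `q'` is the dual exponent of `q`. -/
theorem stmt_8 (n N : ℕ) (hN : 0 < N) (w : Fin N → ℝ) (hw : ∀ i, 0 ≤ w i)
    (x : Fin n → ℝ) (ε : ℝ) (hε : 0 ≤ ε)
    (q q' : ℝ≥0∞) (hq : 1 ≤ q) (hdual : 1 / q + 1 / q' = 1) :
    sSup {y : ℝ | ∃ Δ : Fin N → Fin n → ℝ,
        (1 / (N : ℝ)) * (∑ i, qnorm q (Δ i)) ≤ ε ∧
        y = ∑ i, w i * ∑ j, Δ i j * x j} =
      N * ε * (Finset.univ.sup' (Finset.univ_nonempty_iff.mpr ⟨⟨0, hN⟩⟩) w) * qnorm q' x :=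
  stmt_8_general n N hN w hw x ε hε q q' hdual
end

section
/- Let Ξ ⊆ ℝ^n_+ be a nonempty convex, closed, and bounded set, let ξ̂_1,…,ξ̂_N ∈ Ξ, let q ∈ [1,∞], ε > 0, let l ∈ {1,…,N} and α ∈ ((l−1)/N, l/N]. Let ξ̄ ∈ Ξ maximize 1ᵀξ over ξ ∈ Ξ, and let c ≥ 1 satisfy ‖ξ̄ − ξ̂_i‖_q ≤ c ε N / l for all i ∈ {1,…,N}. Define ξ'_i = ξ̂_i + (ξ̄ − ξ̂_i)/c for i ∈ {1,…,N}, and let ζ ∈ ℝ^n be given by ζ_j = max_{ξ ∈ Ξ} ξ_j. Let X ⊆ {0,1}^n be nonempty and finite, suppose x' ∈ X minimizes x ↦ CVaR^α(ξ'_1ᵀx,…,ξ'_Nᵀx) over X, and suppose ζᵀx' ≤ b · ξ̄ᵀx' for some constant b ≥ 1. Then x' is a (b·c)-approximate solution to the Wasserstein distributionally robust problem: for every x ∈ X, the maximum over (ξ_1,…,ξ_N) ∈ Ξ^N with Σ_{i=1}^N ‖ξ_i − ξ̂_i‖_q ≤ Nε of CVaR^α(ξ_1ᵀx',…,ξ_Nᵀx')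 is at most b·c times the maximum over the same set of CVaR^α(ξ_1ᵀx,…,ξ_Nᵀx). -/
open scoped BigOperators ENNReal

/-!
Since CVaR lies between the smallest and the largest of its arguments, the worst case for `x'`
is at most `ζᵀx' ≤ b · ξ̄ᵀx'`, while `ξ'_i ≥ ξ̄ / c` componentwise (because `ξ̂_i ≥ 0`) gives
`ξ̄ᵀx' / c ≤ CVaR(ξ'ᵀx') ≤ CVaR(ξ'ᵀx)` by optimality of `x'`. To bound `CVaR(ξ'ᵀx)` by the
worst case for `x`, move only the `l` samples with the largest values `ξ'_iᵀx` to `ξ'_i`: this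
costs at most `l · εN/l = Nε`, and as `αN ≤ l` the CVaR only sees those `l` values.
-/

open Finset

/-- The Rockafellar–Uryasev objective; `cvar N α c` is definitionally its infimum over `t`. -/
noncomputable def cvarObjective (N : ℕ) (α : ℝ) (c : Fin N → ℝ) (t : ℝ) : ℝ :=
  t + 1 / (α * N) * ∑ i, max (c i - t) 0

section CVaR

variable {N : ℕ} {α : ℝ}

lemma le_cvarObjective (hN : 0 < N) (hα0 : 0 < α) (hα1 : α ≤ 1) {c : Fin N → ℝ} {m : ℝ}
    (hm : ∀ i, m ≤ c i) (t : ℝ) : m ≤ cvarObjective N α c t := by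
  unfold cvarObjective
  rcases le_or_gt m t with hmt | htm
  · have : 0 ≤ 1 / (α * N) * ∑ i, max (c i - t) 0 :=
      mul_nonneg (by positivity) (sum_nonneg fun i _ => le_max_right _ _)
    linarith
  · have hsum : N * (m - t) ≤ ∑ i, max (c i - t) 0 := by
      calc (N : ℝ) * (m - t) = ∑ _i : Fin N, (m - t) := by
            rw [sum_const, card_univ, Fintype.card_fin, nsmul_eq_mul]
        _ ≤ ∑ i, max (c i - t) 0 :=
          sum_le_sum fun i _ => le_max_of_le_left (by linarith [hm i])
    have hdiv : m - t ≤ 1 / (α * N) * (N * (m - t)) := by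
      rw [show 1 / (α * N) * (N * (m - t)) = (m - t) / α by field_simp]
      exact le_div_self (by linarith) hα0 hα1
    linarith [mul_le_mul_of_nonneg_left hsum (by positivity : (0 : ℝ) ≤ 1 / (α * N))]

lemma bddBelow_range_cvarObjective (hN : 0 < N) (hα0 : 0 < α) (hα1 : α ≤ 1)
    (c : Fin N → ℝ) : BddBelow (Set.range (cvarObjective N α c)) := by
  have : Nonempty (Fin N) := ⟨⟨0, hN⟩⟩
  refine ⟨univ.inf' univ_nonempty c, ?_⟩
  rintro _ ⟨t, rfl⟩
  exact le_cvarObjective hN hα0 hα1 (fun i => inf'_le _ (mem_univ i)) t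

lemma cvar_le_cvarObjective (hN : 0 < N) (hα0 : 0 < α) (hα1 : α ≤ 1)
    (c : Fin N → ℝ) (t : ℝ) : cvar N α c ≤ cvarObjective N α c t :=
  ciInf_le (bddBelow_range_cvarObjective hN hα0 hα1 c) t

lemma le_cvar (hN : 0 < N) (hα0 : 0 < α) (hα1 : α ≤ 1) {c : Fin N → ℝ} {m : ℝ}
    (hm : ∀ i, m ≤ c i) : m ≤ cvar N α c :=
  le_ciInf (le_cvarObjective hN hα0 hα1 hm)

lemma cvar_le (hN : 0 < N) (hα0 : 0 < α) (hα1 : α ≤ 1) {c : Fin N → ℝ} {M : ℝ}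
    (hM : ∀ i, c i ≤ M) : cvar N α c ≤ M := by
  have hzero : ∑ i, max (c i - M) 0 = 0 :=
    sum_eq_zero fun i _ => max_eq_right (by linarith [hM i])
  simpa [cvarObjective, hzero] using cvar_le_cvarObjective hN hα0 hα1 c M

lemma cvarObjective_le_of_eqOn (hα0 : 0 ≤ α) {v w : Fin N → ℝ} {S : Finset (Fin N)}
    (hvw : ∀ i ∈ S, w i = v i) {t : ℝ} (ht : ∀ i ∉ S, v i ≤ t) :
    cvarObjective N α v t ≤ cvarObjective N α w t := by
  have hsum : ∑ i, max (v i - t) 0 ≤ ∑ i, max (w i - t) 0 := by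
    refine sum_le_sum fun i _ => ?_
    by_cases hi : i ∈ S
    · rw [hvw i hi]
    · rw [max_eq_right (by linarith [ht i hi])]
      exact le_max_right _ _
  unfold cvarObjective
  gcongr

/-- Lowering `t` below `τ` adds at least `#S / (αN) ≥ 1` times the decrease to the sum term. -/
lemma cvarObjective_le_of_le (hN : 0 < N) (hα0 : 0 < α) {w : Fin N → ℝ} {S : Finset (Fin N)}
    (hαS : α * N ≤ #S) {τ t : ℝ} (hτ : ∀ i ∈ S, τ ≤ w i) (ht : t ≤ τ) :
    cvarObjective N α w τ ≤ cvarObjective N α w t := by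
  have hsum : ∑ i, max (w i - τ) 0 + #S * (τ - t) ≤ ∑ i, max (w i - t) 0 := by
    have hS : ∑ i, (if i ∈ S then τ - t else 0) = #S * (τ - t) := by
      rw [sum_ite_mem, univ_inter, sum_const, nsmul_eq_mul]
    rw [← hS, ← sum_add_distrib]
    refine sum_le_sum fun i _ => ?_
    split_ifs with hi
    · have := hτ i hi
      rw [max_eq_left (by linarith), max_eq_left (by linarith)]
      linarith
    · rw [add_zero]
      exact max_le_max (by linarith) le_rfl
  have hαN : 0 < α * N := mul_pos hα0 (by exact_mod_cast hN)
  have hscale : τ - t ≤ 1 / (α * N) * (#S * (τ - t)) := by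
    rw [one_div_mul_eq_div, le_div_iff₀ hαN]
    nlinarith
  unfold cvarObjective
  nlinarith [mul_le_mul_of_nonneg_left hsum (by positivity : (0 : ℝ) ≤ 1 / (α * N))]

lemma cvar_le_cvar_of_eqOn_top (hN : 0 < N) (hα0 : 0 < α) (hα1 : α ≤ 1)
    {v w : Fin N → ℝ} {S : Finset (Fin N)} (hαS : α * N ≤ #S)
    (hvw : ∀ i ∈ S, w i = v i) {τ : ℝ} (hτS : ∀ i ∈ S, τ ≤ v i)
    (hτSc : ∀ i ∉ S, v i ≤ τ) : cvar N α v ≤ cvar N α w := by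
  refine le_ciInf fun t => ?_
  rcases le_total τ t with hτt | htτ
  · calc cvar N α v ≤ cvarObjective N α v t := cvar_le_cvarObjective hN hα0 hα1 v t
      _ ≤ cvarObjective N α w t :=
        cvarObjective_le_of_eqOn hα0.le hvw fun i hi => (hτSc i hi).trans hτt
  · calc cvar N α v ≤ cvarObjective N α v τ := cvar_le_cvarObjective hN hα0 hα1 v τ
      _ ≤ cvarObjective N α w τ := cvarObjective_le_of_eqOn hα0.le hvw hτSc
      _ ≤ cvarObjective N α w t :=
        cvarObjective_le_of_le hN hα0 hαS (fun i hi => hvw i hi ▸ hτS i hi) htτ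

end CVaR

/-- Maximizing `∑ i ∈ S, v i` over `#S = l` rules out exchanging a member of `S` for a strictly
larger value outside. -/
lemma exists_card_eq_separating {ι : Type*} [Fintype ι] (v : ι → ℝ) {l : ℕ} (hl0 : 0 < l)
    (hl : l ≤ Fintype.card ι) :
    ∃ S : Finset ι, #S = l ∧ ∃ τ, (∀ i ∈ S, τ ≤ v i) ∧ ∀ i ∉ S, v i ≤ τ := by
  classical
  obtain ⟨S, hSmem, hSmax⟩ := exists_max_image (univ.powersetCard l) (fun T => ∑ i ∈ T, v i)
    (powersetCard_nonempty.mpr (by simpa using hl))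
  have hScard : #S = l := (mem_powersetCard.mp hSmem).2
  obtain ⟨i₀, hi₀, hi₀min⟩ := exists_min_image S v (card_pos.mp (hScard ▸ hl0))
  refine ⟨S, hScard, v i₀, hi₀min, fun i hi => ?_⟩
  by_contra! hlt
  have hiE : i ∉ S.erase i₀ := fun h => hi (mem_of_mem_erase h)
  have hcard : #(insert i (S.erase i₀)) = l := by
    rw [card_insert_of_notMem hiE, card_erase_of_mem hi₀, hScard]
    omega
  have hexchange := hSmax _ (mem_powersetCard.mpr ⟨subset_univ _, hcard⟩)
  rw [sum_insert hiE, sum_erase_eq_sub hi₀] at hexchange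
  linarith

lemma qnorm_eq_norm {n : ℕ} {q : ℝ≥0∞} [Fact (1 ≤ q)] (v : Fin n → ℝ) :
    qnorm q v = ‖WithLp.toLp q v‖ := by
  unfold qnorm
  split_ifs with hq
  · subst hq
    rw [PiLp.norm_eq_ciSup]
    rfl
  · have hq1 : 1 ≤ q := Fact.out
    rw [PiLp.norm_eq_sum (ENNReal.toReal_pos (by positivity) hq)]
    rfl

lemma qnorm_zero {n : ℕ} {q : ℝ≥0∞} (hq : 1 ≤ q) : qnorm q (0 : Fin n → ℝ) = 0 := by
  have : Fact (1 ≤ q) := ⟨hq⟩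
  rw [qnorm_eq_norm, WithLp.toLp_zero, norm_zero]

noncomputable def distortedSample {n N : ℕ} (ξh : Fin N → Fin n → ℝ) (ξbar : Fin n → ℝ)
    (c : ℝ) : Fin N → Fin n → ℝ :=
  fun i j => ξh i j + (ξbar j - ξh i j) / c

noncomputable def worstCaseCVaR {n : ℕ} (N : ℕ) (α : ℝ) (Ξ : Set (Fin n → ℝ))
    (ξh : Fin N → Fin n → ℝ) (q : ℝ≥0∞) (ε : ℝ) (x : Fin n → ℝ) : ℝ :=
  sSup {y : ℝ | ∃ ξ : Fin N → Fin n → ℝ, (∀ i, ξ i ∈ Ξ) ∧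
    (∑ i, qnorm q (fun j => ξ i j - ξh i j)) ≤ N * ε ∧
    y = cvar N α (fun i => ∑ j, ξ i j * x j)}

section Distortion

variable {n N : ℕ} {ξh : Fin N → Fin n → ℝ} {ξbar : Fin n → ℝ} {c : ℝ}

lemma distortedSample_mem {Ξ : Set (Fin n → ℝ)} (hconv : Convex ℝ Ξ) (hξh : ∀ i, ξh i ∈ Ξ)
    (hξbar : ξbar ∈ Ξ) (hc : 1 ≤ c) (i : Fin N) : distortedSample ξh ξbar c i ∈ Ξ := by
  have hc0 : 0 < c := by linarith
  convert hconv (hξh i) hξbar (sub_nonneg.mpr (inv_le_one_of_one_le₀ hc)) (inv_nonneg.mpr hc0.le)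
    (sub_add_cancel 1 c⁻¹) using 1
  ext j
  simp only [distortedSample, Pi.add_apply, Pi.smul_apply, smul_eq_mul]
  field_simp
  ring

lemma div_le_distortedSample {i : Fin N} {j : Fin n} (hξh : 0 ≤ ξh i j) (hc : 1 ≤ c) :
    ξbar j / c ≤ distortedSample ξh ξbar c i j := by
  have hc0 : 0 < c := by linarith
  rw [distortedSample, div_le_iff₀ hc0, add_mul, div_mul_cancel₀ _ hc0.ne']
  nlinarith

lemma qnorm_distortedSample_sub {q : ℝ≥0∞} (hq : 1 ≤ q) (hc : 0 < c) (i : Fin N) :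
    qnorm q (fun j => distortedSample ξh ξbar c i j - ξh i j) =
      qnorm q (fun j => ξbar j - ξh i j) / c := by
  have : Fact (1 ≤ q) := ⟨hq⟩
  have hsmul : (fun j => distortedSample ξh ξbar c i j - ξh i j) =
      c⁻¹ • fun j => ξbar j - ξh i j := by
    ext j
    simp only [distortedSample, Pi.smul_apply, smul_eq_mul]
    ring
  rw [hsmul, qnorm_eq_norm, qnorm_eq_norm, WithLp.toLp_smul, norm_smul, Real.norm_eq_abs,
    abs_inv, abs_of_pos hc, inv_mul_eq_div]

lemma sum_mul_div_le_cvar_distortedSample {α : ℝ} (hN : 0 < N) (hα0 : 0 < α) (hα1 : α ≤ 1)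
    (hξh : ∀ i j, 0 ≤ ξh i j) (hc : 1 ≤ c) {x : Fin n → ℝ} (hx : ∀ j, 0 ≤ x j) :
    (∑ j, ξbar j * x j) / c ≤ cvar N α (fun i => ∑ j, distortedSample ξh ξbar c i j * x j) := by
  refine le_cvar hN hα0 hα1 fun i => ?_
  rw [sum_div]
  refine sum_le_sum fun j _ => ?_
  rw [mul_div_right_comm]
  exact mul_le_mul_of_nonneg_right (div_le_distortedSample (hξh i j) hc) (hx j)

lemma sum_qnorm_piecewise_distortedSample_sub_le {q : ℝ≥0∞} (hq : 1 ≤ q) (hc : 0 < c)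
    {ε : ℝ} {l : ℕ} (hl : 0 < l)
    (hcbound : ∀ i, qnorm q (fun j => ξbar j - ξh i j) ≤ c * ε * N / l)
    {S : Finset (Fin N)} (hS : #S = l) :
    ∑ i, qnorm q (fun j => S.piecewise (distortedSample ξh ξbar c) ξh i j - ξh i j) ≤ N * ε := by
  calc ∑ i, qnorm q (fun j => S.piecewise (distortedSample ξh ξbar c) ξh i j - ξh i j)
      ≤ ∑ i, if i ∈ S then ε * N / l else 0 := by
        refine sum_le_sum fun i _ => ?_
        by_cases hi : i ∈ S
        · rw [piecewise_eq_of_mem _ _ _ hi, if_pos hi, qnorm_distortedSample_sub hq hc,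
            div_le_iff₀ hc]
          linarith [hcbound i, show c * ε * N / l = ε * N / l * c by ring]
        · simp only [piecewise_eq_of_notMem _ _ _ hi, sub_self, if_neg hi]
          exact (qnorm_zero hq).le
    _ = N * ε := by
        rw [sum_ite_mem, univ_inter, sum_const, hS, nsmul_eq_mul]
        field_simp

end Distortion

section WorstCase

variable {n N : ℕ} {α : ℝ} {Ξ : Set (Fin n → ℝ)} {ξh : Fin N → Fin n → ℝ} {q : ℝ≥0∞} {ε : ℝ}
  {x : Fin n → ℝ} {M : ℝ}

lemma worstCaseCVaR_le (hN : 0 < N) (hα0 : 0 < α) (hα1 : α ≤ 1)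
    (hM : ∀ ξ ∈ Ξ, ∑ j, ξ j * x j ≤ M) (hM0 : 0 ≤ M) : worstCaseCVaR N α Ξ ξh q ε x ≤ M := by
  refine Real.sSup_le ?_ hM0
  rintro y ⟨ξ, hξ, -, rfl⟩
  exact cvar_le hN hα0 hα1 fun i => hM _ (hξ i)

lemma cvar_le_worstCaseCVaR (hN : 0 < N) (hα0 : 0 < α) (hα1 : α ≤ 1)
    (hM : ∀ ξ ∈ Ξ, ∑ j, ξ j * x j ≤ M) {ξ : Fin N → Fin n → ℝ} (hξ : ∀ i, ξ i ∈ Ξ)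
    (hcost : ∑ i, qnorm q (fun j => ξ i j - ξh i j) ≤ N * ε) :
    cvar N α (fun i => ∑ j, ξ i j * x j) ≤ worstCaseCVaR N α Ξ ξh q ε x := by
  refine le_csSup ⟨M, ?_⟩ ⟨ξ, hξ, hcost, rfl⟩
  rintro y ⟨ξ, hξ, -, rfl⟩
  exact cvar_le hN hα0 hα1 fun i => hM _ (hξ i)

lemma cvar_distortedSample_le_worstCaseCVaR (hN : 0 < N) (hα0 : 0 < α) (hα1 : α ≤ 1)
    {l : ℕ} (hl : 0 < l) (hlN : l ≤ N) (hαl : α * N ≤ l) (hconv : Convex ℝ Ξ)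
    (hξh : ∀ i, ξh i ∈ Ξ) {ξbar : Fin n → ℝ} (hξbar : ξbar ∈ Ξ) (hq : 1 ≤ q) {c : ℝ}
    (hc : 1 ≤ c) (hcbound : ∀ i, qnorm q (fun j => ξbar j - ξh i j) ≤ c * ε * N / l)
    (hM : ∀ ξ ∈ Ξ, ∑ j, ξ j * x j ≤ M) :
    cvar N α (fun i => ∑ j, distortedSample ξh ξbar c i j * x j) ≤
      worstCaseCVaR N α Ξ ξh q ε x := by
  obtain ⟨S, hS, τ, hτS, hτSc⟩ :=
    exists_card_eq_separating (fun i => ∑ j, distortedSample ξh ξbar c i j * x j) hl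
      (by simpa using hlN)
  have hmem : ∀ i, S.piecewise (distortedSample ξh ξbar c) ξh i ∈ Ξ := fun i =>
    S.piecewise_cases (distortedSample ξh ξbar c) ξh (· ∈ Ξ)
      (distortedSample_mem hconv hξh hξbar hc i) (hξh i)
  calc cvar N α (fun i => ∑ j, distortedSample ξh ξbar c i j * x j)
      ≤ cvar N α (fun i => ∑ j, S.piecewise (distortedSample ξh ξbar c) ξh i j * x j) :=
        cvar_le_cvar_of_eqOn_top hN hα0 hα1 (hS ▸ hαl)
          (fun i hi => by rw [piecewise_eq_of_mem _ _ _ hi]) hτS hτSc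
    _ ≤ worstCaseCVaR N α Ξ ξh q ε x :=
        cvar_le_worstCaseCVaR hN hα0 hα1 hM hmem
          (sum_qnorm_piecewise_distortedSample_sub_le hq (by linarith) hl hcbound hS)

end WorstCase

theorem stmt_10_general (n N : ℕ) (hN : 0 < N)
    (Ξ : Set (Fin n → ℝ)) (hconv : Convex ℝ Ξ)
    (hpos : ∀ ξ ∈ Ξ, ∀ j, 0 ≤ ξ j)
    (ξh : Fin N → Fin n → ℝ) (hξh : ∀ i, ξh i ∈ Ξ)
    (q : ℝ≥0∞) (hq : 1 ≤ q) (ε : ℝ)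
    (l : ℕ) (hl1 : 1 ≤ l) (hlN : l ≤ N)
    (α : ℝ) (hαl : ((l : ℝ) - 1) / N < α) (hαu : α ≤ (l : ℝ) / N)
    (ξbar : Fin n → ℝ) (hξbar : ξbar ∈ Ξ)
    (c : ℝ) (hc : 1 ≤ c)
    (hcbound : ∀ i, qnorm q (fun j => ξbar j - ξh i j) ≤ c * ε * N / l)
    (ζ : Fin n → ℝ) (hζ : ∀ j, IsGreatest {t : ℝ | ∃ ξ ∈ Ξ, ξ j = t} (ζ j))
    (X : Finset (Fin n → ℝ))
    (hXbin : ∀ x ∈ X, ∀ j, x j = 0 ∨ x j = 1)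
    (x' : Fin n → ℝ) (hx' : x' ∈ X)
    (hopt : ∀ x ∈ X,
      cvar N α (fun i => ∑ j, (ξh i j + (ξbar j - ξh i j) / c) * x' j) ≤
        cvar N α (fun i => ∑ j, (ξh i j + (ξbar j - ξh i j) / c) * x j))
    (b : ℝ) (hb : 1 ≤ b) (hζx' : (∑ j, ζ j * x' j) ≤ b * ∑ j, ξbar j * x' j) :
    ∀ x ∈ X,
      sSup {y : ℝ | ∃ ξ : Fin N → Fin n → ℝ, (∀ i, ξ i ∈ Ξ) ∧
          (∑ i, qnorm q (fun j => ξ i j - ξh i j)) ≤ N * ε ∧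
          y = cvar N α (fun i => ∑ j, ξ i j * x' j)} ≤
        b * c * sSup {y : ℝ | ∃ ξ : Fin N → Fin n → ℝ, (∀ i, ξ i ∈ Ξ) ∧
          (∑ i, qnorm q (fun j => ξ i j - ξh i j)) ≤ N * ε ∧
          y = cvar N α (fun i => ∑ j, ξ i j * x j)} := by
  intro x hx
  have hNR : (0 : ℝ) < N := by exact_mod_cast hN
  have hα0 : 0 < α := lt_of_le_of_lt (div_nonneg (by simpa using hl1) hNR.le) hαl
  have hα1 : α ≤ 1 := hαu.trans ((div_le_one hNR).mpr (by exact_mod_cast hlN))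
  have hαN : α * N ≤ l := (le_div_iff₀ hNR).mp hαu
  have hX0 : ∀ x ∈ X, ∀ j, 0 ≤ x j := fun x hx j => by
    rcases hXbin x hx j with h | h <;> simp [h]
  have hζbound : ∀ x ∈ X, ∀ ξ ∈ Ξ, ∑ j, ξ j * x j ≤ ∑ j, ζ j * x j := fun x hx ξ hξ =>
    sum_le_sum fun j _ => mul_le_mul_of_nonneg_right ((hζ j).2 ⟨ξ, hξ, rfl⟩) (hX0 x hx j)
  change worstCaseCVaR N α Ξ ξh q ε x' ≤ b * c * worstCaseCVaR N α Ξ ξh q ε x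
  calc worstCaseCVaR N α Ξ ξh q ε x' ≤ b * ∑ j, ξbar j * x' j :=
        worstCaseCVaR_le hN hα0 hα1 (fun ξ hξ => (hζbound x' hx' ξ hξ).trans hζx')
          (mul_nonneg (by linarith)
            (sum_nonneg fun j _ => mul_nonneg (hpos _ hξbar j) (hX0 x' hx' j)))
    _ = b * c * ((∑ j, ξbar j * x' j) / c) := by field_simp
    _ ≤ b * c * cvar N α (fun i => ∑ j, distortedSample ξh ξbar c i j * x' j) := by
        gcongr
        exact sum_mul_div_le_cvar_distortedSample hN hα0 hα1 (fun i => hpos _ (hξh i)) hc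
          (hX0 x' hx')
    _ ≤ b * c * cvar N α (fun i => ∑ j, distortedSample ξh ξbar c i j * x j) := by
        gcongr
        exact hopt x hx
    _ ≤ b * c * worstCaseCVaR N α Ξ ξh q ε x := by
        gcongr
        exact cvar_distortedSample_le_worstCaseCVaR hN hα0 hα1 hl1 hlN hαN hconv hξh hξbar hq
          hc hcbound (hζbound x hx)

/-- Approximation guarantee for the distorted-sample algorithm over a general convex,
closed, bounded support set `Ξ ⊆ ℝ^n_+`.  With `ξ̄` maximizing `1ᵀξ` over `Ξ`, `c ≥ 1` with
`‖ξ̄ − ξ̂_i‖_q ≤ cεN/l`, distorted sample `ξ'_i = ξ̂_i + (ξ̄ − ξ̂_i)/c`, `ζ_j = max_{ξ∈Ξ} ξ_j`: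
if `x' ∈ X` minimizes the CVaR of the distorted sample over `X` and `ζᵀx' ≤ b·ξ̄ᵀx'` with
`b ≥ 1`, then for every `x ∈ X` the worst-case CVaR of `x'` over the ambiguity set is at
most `b·c` times the worst-case CVaR of `x`. -/
theorem stmt_10 (n N : ℕ) (hN : 0 < N)
    (Ξ : Set (Fin n → ℝ)) (hΞne : Ξ.Nonempty) (hconv : Convex ℝ Ξ) (hcl : IsClosed Ξ)
    (hbd : Bornology.IsBounded Ξ) (hpos : ∀ ξ ∈ Ξ, ∀ j, 0 ≤ ξ j)
    (ξh : Fin N → Fin n → ℝ) (hξh : ∀ i, ξh i ∈ Ξ)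
    (q : ℝ≥0∞) (hq : 1 ≤ q) (ε : ℝ) (hε : 0 < ε)
    (l : ℕ) (hl1 : 1 ≤ l) (hlN : l ≤ N)
    (α : ℝ) (hαl : ((l : ℝ) - 1) / N < α) (hαu : α ≤ (l : ℝ) / N)
    (ξbar : Fin n → ℝ) (hξbar : ξbar ∈ Ξ)
    (hbarmax : ∀ ξ ∈ Ξ, (∑ j, ξ j) ≤ ∑ j, ξbar j)
    (c : ℝ) (hc : 1 ≤ c)
    (hcbound : ∀ i, qnorm q (fun j => ξbar j - ξh i j) ≤ c * ε * N / l)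
    (ζ : Fin n → ℝ) (hζ : ∀ j, IsGreatest {t : ℝ | ∃ ξ ∈ Ξ, ξ j = t} (ζ j))
    (X : Finset (Fin n → ℝ)) (hXne : X.Nonempty)
    (hXbin : ∀ x ∈ X, ∀ j, x j = 0 ∨ x j = 1)
    (x' : Fin n → ℝ) (hx' : x' ∈ X)
    (hopt : ∀ x ∈ X,
      cvar N α (fun i => ∑ j, (ξh i j + (ξbar j - ξh i j) / c) * x' j) ≤
        cvar N α (fun i => ∑ j, (ξh i j + (ξbar j - ξh i j) / c) * x j))
    (b : ℝ) (hb : 1 ≤ b) (hζx' : (∑ j, ζ j * x' j) ≤ b * ∑ j, ξbar j * x' j) :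
    ∀ x ∈ X,
      sSup {y : ℝ | ∃ ξ : Fin N → Fin n → ℝ, (∀ i, ξ i ∈ Ξ) ∧
          (∑ i, qnorm q (fun j => ξ i j - ξh i j)) ≤ N * ε ∧
          y = cvar N α (fun i => ∑ j, ξ i j * x' j)} ≤
        b * c * sSup {y : ℝ | ∃ ξ : Fin N → Fin n → ℝ, (∀ i, ξ i ∈ Ξ) ∧
          (∑ i, qnorm q (fun j => ξ i j - ξh i j)) ≤ N * ε ∧
          y = cvar N α (fun i => ∑ j, ξ i j * x j)} :=
  stmt_10_general n N hN Ξ hconv hpos ξh hξh q hq ε l hl1 hlN α hαl hαu ξbar hξbar c hc hcbound ζ hζ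
    X hXbin x' hx' hopt b hb hζx'
end

section
/- Let K and l be positive integers, set N = K + l − 1, and let α ∈ ((l−1)/N, l/N]. Let c_1,…,c_K be nonnegative real numbers and let M ≥ max_{i ∈ {1,…,K}} c_i. Then the Conditional Value at Risk of the N values consisting of c_1,…,c_K together with l−1 copies of M satisfies CVaR^α(c_1,…,c_K, M,…,M) = (l−1)M/(αN) + (1 − (l−1)/(αN)) · max_{i ∈ {1,…,K}} c_i, and the coefficient 1 − (l−1)/(αN) is strictly positive. -/
/-!
Write `A = αN`; the constraint on `α` says exactly `l - 1 < A ≤ l`. After scaling by `A`, the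
CVaR objective is `t ↦ A t + ∑ i (c i - t)⁺ + (l - 1)(M - t)⁺`. Left of `C = max c` it decreases
at rate at least `1 + (l - 1) - A ≥ 0`, and right of `C` (where the `c`-terms vanish) it
increases at rate at least `A - (l - 1) > 0`, so the infimum is attained at `t = C`, which gives
the stated value.
-/

open scoped BigOperators ENNReal

open Finset

theorem Fin.sum_dite_lt_eq_add_nsmul {α β : Type*} [AddCommMonoid β] (K m : ℕ) (c : Fin K → α)
    (M : α) (f : α → β) :
    ∑ i : Fin (K + m), f (if h : (i : ℕ) < K then c ⟨i, h⟩ else M) = ∑ i, f (c i) + m • f M := by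
  simp [Fin.sum_univ_add]

section
variable {ι : Type*} [Fintype ι] {c : ι → ℝ} {C : ℝ}

theorem IsGreatest.sub_le_sum_max_sub (hC : IsGreatest (Set.range c) C) (t : ℝ) :
    C - t ≤ ∑ i, max (c i - t) 0 := by
  obtain ⟨⟨j, rfl⟩, -⟩ := hC
  exact (le_max_left _ _).trans
    (single_le_sum (f := fun i => max (c i - t) 0) (fun i _ => le_max_right _ _) (mem_univ j))

theorem IsGreatest.sum_max_sub_eq_zero (hC : IsGreatest (Set.range c) C) :
    ∑ i, max (c i - C) 0 = 0 :=
  sum_eq_zero fun i _ => max_eq_right (sub_nonpos.2 (hC.2 (Set.mem_range_self i)))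

theorem IsGreatest.mul_add_le (hC : IsGreatest (Set.range c) C) {m M A : ℝ} (hm : 0 ≤ m)
    (hmA : m ≤ A) (hA : A ≤ m + 1) (t : ℝ) :
    A * C + m * (M - C) ≤ A * t + (∑ i, max (c i - t) 0 + m * max (M - t) 0) := by
  have hMt : m * (M - t) ≤ m * max (M - t) 0 := mul_le_mul_of_nonneg_left (le_max_left _ _) hm
  rcases le_total t C with ht | ht
  · nlinarith [hC.sub_le_sum_max_sub t, mul_nonneg (sub_nonneg.2 ht) (sub_nonneg.2 hA)]
  · nlinarith [sum_nonneg (s := univ) fun i _ => le_max_right (c i - t) 0,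
      mul_nonneg (sub_nonneg.2 ht) (sub_nonneg.2 hmA)]

end

theorem Finset.isGreatest_range_sup'_univ {ι α : Type*} [Fintype ι] [LinearOrder α]
    (h : (univ : Finset ι).Nonempty) (f : ι → α) : IsGreatest (Set.range f) (univ.sup' h f) := by
  obtain ⟨j, -, hj⟩ := exists_mem_eq_sup' h f
  exact ⟨⟨j, hj.symm⟩, Set.forall_mem_range.2 fun i => le_sup' f (mem_univ i)⟩

theorem cvar_append_const {K m : ℕ} {α : ℝ} {c : Fin K → ℝ} {C M : ℝ}
    (hC : IsGreatest (Set.range c) C) (hCM : C ≤ M) (hA₀ : 0 < α * (K + m))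
    (hmA : m ≤ α * (K + m)) (hA : α * (K + m) ≤ m + 1) :
    cvar (K + m) α (fun i => if h : (i : ℕ) < K then c ⟨i, h⟩ else M) =
      C + m * (M - C) / (α * (K + m)) := by
  set A : ℝ := α * (K + m)
  have hsplit (t : ℝ) : ∑ i : Fin (K + m), max ((if h : (i : ℕ) < K then c ⟨i, h⟩ else M) - t) 0
      = ∑ i, max (c i - t) 0 + m * max (M - t) 0 := by
    rw [Fin.sum_dite_lt_eq_add_nsmul K m c M (fun x => max (x - t) 0), nsmul_eq_mul]
  have hmin : IsLeast (Set.range fun t => t + 1 / A * (∑ i, max (c i - t) 0 + m * max (M - t) 0))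
      (C + m * (M - C) / A) := by
    refine ⟨⟨C, ?_⟩, Set.forall_mem_range.2 fun t => ?_⟩
    · simp only [hC.sum_max_sub_eq_zero, max_eq_left (sub_nonneg.2 hCM)]
      ring
    · rw [← sub_nonneg]
      have hscaled := hC.mul_add_le (M := M) (Nat.cast_nonneg m) hmA hA t
      field_simp
      linarith
  unfold cvar
  push_cast
  simp only [hsplit]
  exact hmin.isGLB.ciInf_eq

theorem stmt_16_general (K l : ℕ) (hK : 0 < K) (hl : 0 < l) (N : ℕ) (hNdef : N = K + l - 1)
    (α : ℝ) (hαl : ((l : ℝ) - 1) / N < α) (hαu : α ≤ (l : ℝ) / N)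
    (c : Fin K → ℝ) (M : ℝ) (hM : ∀ i, c i ≤ M) :
    cvar N α (fun i => if h : (i : ℕ) < K then c ⟨i, h⟩ else M) =
      ((l : ℝ) - 1) * M / (α * N) +
        (1 - ((l : ℝ) - 1) / (α * N)) *
          (Finset.univ.sup' (Finset.univ_nonempty_iff.mpr ⟨⟨0, hK⟩⟩) c) ∧
      0 < 1 - ((l : ℝ) - 1) / (α * N) := by
  obtain ⟨m, rfl⟩ : ∃ m, l = m + 1 := Nat.exists_eq_add_one.2 hl
  obtain rfl : N = K + m := by omega
  have hN : (0 : ℝ) < (K + m) := by exact_mod_cast Nat.add_pos_left hK m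
  push_cast [add_sub_cancel_right] at hαl hαu ⊢
  set C := univ.sup' (univ_nonempty_iff.mpr ⟨⟨0, hK⟩⟩) c
  have hC : IsGreatest (Set.range c) C := Finset.isGreatest_range_sup'_univ _ c
  have hmA : m < α * (K + m) := (div_lt_iff₀ hN).1 hαl
  have hA : α * (K + m) ≤ m + 1 := (le_div_iff₀ hN).1 hαu
  have hA₀ : 0 < α * (K + m) := (Nat.cast_nonneg m).trans_lt hmA
  rw [cvar_append_const hC (sup'_le _ _ fun i _ => hM i) hA₀ hmA.le hA]
  refine ⟨by field_simp; ring, by rwa [sub_pos, div_lt_one hA₀]⟩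

/-- Key identity of the NP-hardness reduction: for `N = K + l − 1`,
`α ∈ ((l−1)/N, l/N]`, nonnegative values `c_1,…,c_K` and `M ≥ max_i c_i`, the CVaR of the
`N` values consisting of `c_1,…,c_K` together with `l−1` copies of `M` equals
`(l−1)M/(αN) + (1 − (l−1)/(αN)) · max_i c_i`, and `1 − (l−1)/(αN) > 0`. -/
theorem stmt_16 (K l : ℕ) (hK : 0 < K) (hl : 0 < l) (N : ℕ) (hNdef : N = K + l - 1)
    (α : ℝ) (hαl : ((l : ℝ) - 1) / N < α) (hαu : α ≤ (l : ℝ) / N)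
    (c : Fin K → ℝ) (hc : ∀ i, 0 ≤ c i)
    (M : ℝ) (hM : ∀ i, c i ≤ M) :
    cvar N α (fun i => if h : (i : ℕ) < K then c ⟨i, h⟩ else M) =
      ((l : ℝ) - 1) * M / (α * N) +
        (1 - ((l : ℝ) - 1) / (α * N)) *
          (Finset.univ.sup' (Finset.univ_nonempty_iff.mpr ⟨⟨0, hK⟩⟩) c) ∧
      0 < 1 - ((l : ℝ) - 1) / (α * N) :=
  stmt_16_general K l hK hl N hNdef α hαl hαu c M hM
end
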